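/- Let C₁ and C₂ be finite sets of replicas with |C₁| = |C₂| = n, let F₁ ⊆ C₁ and F₂ ⊆ C₂ with |F₁| ≤ f and |F₂| ≤ f, assume n > 3f, and let φ : C₂ → C₁ be an injective map (matching replica identifiers across clusters). Let S = φ(C₂ \ F₂) be the set of replicas in C₁ receiving remote view-change requests from the non-faulty replicas of C₂. Then |S| ≥ n − f and |S \ F₁| ≥ n − 2f > f; in particular, strictly more than f non-faulty replicas of C₁ receive a remote view-change request, enough to trigger a local view-change in C₁ (which requires f + 1 identical requests). -/
import Mathlib


/-- Remote view-change counting (Proposition 2): if each of the `n - f`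
non-faulty replicas of cluster `C₂` sends a request to the replica of
cluster `C₁` with the same identifier (an injective map `φ`), then the set
`S = φ(C₂ \ F₂)` of receivers in `C₁` satisfies `|S| ≥ n - f` and contains
strictly more than `f` non-faulty replicas of `C₁`. -/
theorem remote_view_change_trigger {α β : Type*} [DecidableEq α] [DecidableEq β]
    (C₁ : Finset α) (C₂ : Finset β) (n f : ℕ)
    (hC₁ : C₁.card = n) (hC₂ : C₂.card = n) (hnf : n > 3 * f)
    (F₁ : Finset α) (hF₁sub : F₁ ⊆ C₁) (hF₁ : F₁.card ≤ f)
    (F₂ : Finset β) (hF₂sub : F₂ ⊆ C₂) (hF₂ : F₂.card ≤ f)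
    (φ : β → α) (hinj : Set.InjOn φ ↑C₂) (hmaps : ∀ r ∈ C₂, φ r ∈ C₁)
    (S : Finset α) (hS : S = (C₂ \ F₂).image φ) :
    S.card ≥ n - f ∧ (S \ F₁).card ≥ n - 2 * f ∧ n - 2 * f > f := by
  have hScard : S.card = (C₂ \ F₂).card := by
    rw [hS]
    apply Finset.card_image_of_injOn
    exact hinj.mono (by rw [Finset.coe_sdiff]; exact Set.diff_subset)
  have hdiff : (C₂ \ F₂).card = n - F₂.card := by
    rw [Finset.card_sdiff_of_subset hF₂sub, hC₂]
  have h1 : S.card ≥ n - f := by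
    rw [hScard, hdiff]; omega
  refine ⟨h1, ?_, by omega⟩
  have h2 : (S \ F₁).card ≥ S.card - F₁.card := by
    
    have := Finset.le_card_sdiff F₁ S
    omega
  omega
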